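/- Let G be a graph on n vertices with list chromatic number s and let t be a positive integer with t < s. Then for every assignment L of t-element colour lists to the vertices of G, there exists an induced subgraph of G on at least n/⌈s/t⌉ vertices that is L-list colourable. -/

import Mathlib

/-- `G` is `L`-list colourable. -/
def ListColourable {V : Type*} (G : SimpleGraph V) (L : V → Finset ℕ) : Prop :=
  ∃ c : V → ℕ, (∀ v, c v ∈ L v) ∧ ∀ u v, G.Adj u v → c u ≠ c v

/-- `G` is `k`-choosable. -/
def Choosable {V : Type*} (G : SimpleGraph V) (k : ℕ) : Prop :=
  ∀ L : V → Finset ℕ, (∀ v, (L v).card = k) → ListColourable G L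

/-- The list chromatic number of `G`. -/
noncomputable def listChromaticNumber {V : Type*} (G : SimpleGraph V) : ℕ :=
  sInf {k | Choosable G k}

/-!
Replace every colour `a` by the `k = ⌈s/t⌉` colours `a * k + i` (`i < k`). The enlarged lists
have `t * k ≥ s` elements, so an `s`-choosable graph has a proper colouring `c` from them.
Each class `{v | c v % k = i}` is properly coloured from the original lists by `c v / k`, and by
pigeonhole one of these `k` classes contains at least `n / k` vertices.
-/

open Finset

section

variable {V : Type*} {G : SimpleGraph V}

theorem choosable_listChromaticNumber (h : listChromaticNumber G ≠ 0) :
    Choosable G (listChromaticNumber G) :=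
  Nat.sInf_mem (Nat.nonempty_of_pos_sInf (Nat.pos_of_ne_zero h))

theorem Choosable.listColourable_of_le_card {s : ℕ} (hG : Choosable G s) {L : V → Finset ℕ}
    (hL : ∀ v, s ≤ (L v).card) : ListColourable G L := by
  choose M hML hM using fun v => exists_subset_card_eq (hL v)
  obtain ⟨c, hcM, hc⟩ := hG M hM
  exact ⟨c, fun v => hML v (hcM v), hc⟩

def blowUp (k : ℕ) [NeZero k] (A : Finset ℕ) : Finset ℕ :=
  (A ×ˢ univ).map (Nat.divModEquiv k).symm.toEmbedding

section blowUp

variable {k : ℕ} [NeZero k]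

theorem mem_blowUp {A : Finset ℕ} {x : ℕ} : x ∈ blowUp k A ↔ x / k ∈ A := by
  simp [blowUp]

theorem card_blowUp (A : Finset ℕ) : (blowUp k A).card = A.card * k := by
  simp [blowUp]

end blowUp

theorem Choosable.exists_large_partial_colouring [Fintype V] {s k : ℕ} (hG : Choosable G s)
    (hk : 0 < k) (L : V → Finset ℕ) (hL : ∀ v, s ≤ (L v).card * k) :
    ∃ S : Finset V, (Fintype.card V : ℚ) / k ≤ S.card ∧
      ∃ c : V → ℕ, (∀ v ∈ S, c v ∈ L v) ∧ ∀ u ∈ S, ∀ v ∈ S, G.Adj u v → c u ≠ c v := by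
  have : NeZero k := ⟨hk.ne'⟩
  obtain ⟨c, hcL, hc⟩ := hG.listColourable_of_le_card (L := fun v => blowUp k (L v))
    fun v => (hL v).trans_eq (card_blowUp _).symm
  obtain ⟨i, -, hi⟩ := exists_le_card_fiber_of_nsmul_le_card_of_maps_to
    (s := univ) (t := range k) (f := fun v => c v % k) (b := (Fintype.card V : ℚ) / k)
    (fun v _ => mem_range.mpr (Nat.mod_lt _ hk)) (nonempty_range_iff.mpr hk.ne')
    (by simp [mul_div_cancel₀ _ (Nat.cast_ne_zero.mpr hk.ne' : (k : ℚ) ≠ 0)])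
  refine ⟨_, hi, fun v => c v / k, fun v _ => mem_blowUp.mp (hcL v), ?_⟩
  intro u hu v hv huv (hdiv : c u / k = c v / k)
  simp only [mem_filter, mem_univ, true_and] at hu hv
  refine hc u v huv ?_
  rw [← Nat.div_add_mod (c u) k, ← Nat.div_add_mod (c v) k, hdiv, hu, hv]

end

theorem partial_list_colouring_ceil_bound_general
    {V : Type*} [Fintype V] (G : SimpleGraph V) (s t : ℕ)
    (hs : listChromaticNumber G = s)
    (L : V → Finset ℕ) (hL : ∀ v, (L v).card = t) :
    ∃ S : Finset V,
      (Fintype.card V : ℚ) / (⌈(s : ℚ) / t⌉ : ℚ) ≤ S.card ∧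
      ∃ c : V → ℕ, (∀ v ∈ S, c v ∈ L v) ∧
        ∀ u ∈ S, ∀ v ∈ S, G.Adj u v → c u ≠ c v := by
  have hceil : ((⌈(s : ℚ) / t⌉ : ℤ) : ℚ) = ⌈(s : ℚ) / t⌉₊ := by
    rw [← Int.natCast_ceil_eq_ceil (by positivity : (0 : ℚ) ≤ s / t), Int.cast_natCast]
  rw [hceil]
  rcases Nat.eq_zero_or_pos ⌈(s : ℚ) / t⌉₊ with hk | hk
  -- `n / 0 = 0` in `ℚ`, so this case is trivial; it covers `s = 0` and `t = 0`.
  · exact ⟨∅, by simp [hk], 0, by simp, by simp⟩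
  have hst : 0 < (s : ℚ) / t := Nat.ceil_pos.mp hk
  have hs0 : s ≠ 0 := by rintro rfl; simp at hst
  have ht : t ≠ 0 := by rintro rfl; simp at hst
  have hs_le : s ≤ t * ⌈(s : ℚ) / t⌉₊ := by
    have := Nat.le_ceil ((s : ℚ) / t)
    rw [div_le_iff₀' (by positivity)] at this
    exact_mod_cast this
  subst hs
  refine (choosable_listChromaticNumber hs0).exists_large_partial_colouring hk L fun v => ?_
  rwa [hL]

/-- For every `t`-element list assignment `L` (`0 < t < s = χ_L(G)`), a graph on
`n` vertices has an induced subgraph on at least `n/⌈s/t⌉` vertices that is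
`L`-list colourable. -/
theorem partial_list_colouring_ceil_bound
    {V : Type*} [Fintype V] (G : SimpleGraph V) (s t : ℕ)
    (hs : listChromaticNumber G = s) (ht : 0 < t) (hts : t < s)
    (L : V → Finset ℕ) (hL : ∀ v, (L v).card = t) :
    ∃ S : Finset V,
      (Fintype.card V : ℚ) / (⌈(s : ℚ) / t⌉ : ℚ) ≤ S.card ∧
      ∃ c : V → ℕ, (∀ v ∈ S, c v ∈ L v) ∧
        ∀ u ∈ S, ∀ v ∈ S, G.Adj u v → c u ≠ c v :=
  partial_list_colouring_ceil_bound_general G s t hs L hL
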